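/- arXiv:2308.14837 — 8 statements merged into one kernel-verified Lean document; each statement's English description precedes it below -/
import Mathlib

section
/- Let A be a 2×2 matrix with non-negative entries such that there is a permutation π of the columns with A[i,π(1)] ≤ A[i,π(2)] for both rows i. Sample a uniformly random permutation σ of {1,2} and set X_i = A[i,σ(i)]. Then for any two monotone increasing functions f, g : ℝ → ℝ applied to X_1 and X_2 respectively, Cov(f(X_1), g(X_2)) ≤ 0, i.e. E[f(X_1)·g(X_2)] ≤ E[f(X_1)]·E[g(X_2)]. -/
/-!
Write `u σ = f (A 0 (σ 0))` and `v σ = g (A 1 (σ 1))`. Because both rows of `A` increase along the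
same column order `π`, so do `f ∘ A 0` and `g ∘ A 1`. Passing from `σ` to `σ * swap 0 1` exchanges
the columns `σ 0` and `σ 1` read by the two rows, so `u` and `v` vary in opposite directions.
Chebyshev's sum inequality for antivarying functions, divided by the number of permutations
squared, is the claim.
-/

open Equiv

lemma Fin.monotone_two_iff {α : Type*} [Preorder α] {a : Fin 2 → α} : Monotone a ↔ a 0 ≤ a 1 := by
  simp [Fin.monotone_iff_le_succ, Fin.forall_fin_one]

lemma Equiv.Perm.fin_two_eq_or_eq_mul_swap (σ τ : Perm (Fin 2)) :
    τ = σ ∨ τ = σ * swap 0 1 := by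
  revert σ τ
  decide

lemma monovary_of_monotone_comp_perm {ι α β : Type*} [LinearOrder ι] [Preorder α] [Preorder β]
    {a : ι → α} {b : ι → β} (π : Perm ι) (ha : Monotone (a ∘ π)) (hb : Monotone (b ∘ π)) :
    Monovary a b := by
  simpa [Function.comp_def] using (ha.monovary hb).comp_right π.symm

lemma Monovary.antivary_perm_fin_two {α β : Type*} [Preorder α] [Preorder β]
    {a : Fin 2 → α} {b : Fin 2 → β} (h : Monovary a b) :
    Antivary (fun σ : Perm (Fin 2) ↦ a (σ 0)) (fun σ ↦ b (σ 1)) := by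
  intro σ τ hlt
  rcases σ.fin_two_eq_or_eq_mul_swap τ with rfl | rfl
  · exact absurd hlt (lt_irrefl _)
  · simpa using h hlt

lemma Antivary.sum_mul_div_card_le {ι α : Type*} [Fintype ι] [Field α] [LinearOrder α]
    [IsStrictOrderedRing α] {F G : ι → α} (h : Antivary F G) :
    (∑ i, F i * G i) / Fintype.card ι ≤
      ((∑ i, F i) / Fintype.card ι) * ((∑ i, G i) / Fintype.card ι) := by
  rcases isEmpty_or_nonempty ι with hι | hι
  · simp
  have hn : (0 : α) < Fintype.card ι := by exact_mod_cast Fintype.card_pos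
  rw [div_mul_div_comm, div_le_div_iff₀ hn (by positivity)]
  have := mul_le_mul_of_nonneg_right h.card_mul_sum_le_sum_mul_sum hn.le
  linarith

theorem stmt0_general (A : Fin 2 → Fin 2 → ℝ)
    (π : Equiv.Perm (Fin 2)) (hord : ∀ i, A i (π 0) ≤ A i (π 1))
    (f g : ℝ → ℝ) (hf : Monotone f) (hg : Monotone g) :
    (∑ σ : Equiv.Perm (Fin 2), f (A 0 (σ 0)) * g (A 1 (σ 1))) /
        (Fintype.card (Equiv.Perm (Fin 2)) : ℝ) ≤
      ((∑ σ : Equiv.Perm (Fin 2), f (A 0 (σ 0))) / (Fintype.card (Equiv.Perm (Fin 2)) : ℝ)) *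
        ((∑ σ : Equiv.Perm (Fin 2), g (A 1 (σ 1))) / (Fintype.card (Equiv.Perm (Fin 2)) : ℝ)) := by
  have hrow (i : Fin 2) : Monotone (A i ∘ π) := Fin.monotone_two_iff.2 (hord i)
  have hmono : Monovary (fun j ↦ f (A 0 j)) (fun j ↦ g (A 1 j)) :=
    monovary_of_monotone_comp_perm π (hf.comp (hrow 0)) (hg.comp (hrow 1))
  exact hmono.antivary_perm_fin_two.sum_mul_div_card_le

theorem stmt0 (A : Fin 2 → Fin 2 → ℝ) (hA : ∀ i j, 0 ≤ A i j)
    (π : Equiv.Perm (Fin 2)) (hord : ∀ i, A i (π 0) ≤ A i (π 1))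
    (f g : ℝ → ℝ) (hf : Monotone f) (hg : Monotone g) :
    (∑ σ : Equiv.Perm (Fin 2), f (A 0 (σ 0)) * g (A 1 (σ 1))) /
        (Fintype.card (Equiv.Perm (Fin 2)) : ℝ) ≤
      ((∑ σ : Equiv.Perm (Fin 2), f (A 0 (σ 0))) / (Fintype.card (Equiv.Perm (Fin 2)) : ℝ)) *
        ((∑ σ : Equiv.Perm (Fin 2), g (A 1 (σ 1))) / (Fintype.card (Equiv.Perm (Fin 2)) : ℝ)) :=
  stmt0_general A π hord f g hf hg
end

section
/- Let u, v ∈ ℝ^N be vectors with non-negative entries, and define random variables X_1,…,X_N by sampling a uniformly random permutation π of [N] and setting X_i = u_i · v_{π(i)}. Then X_1,…,X_N are negatively associated: for any two monotone (both increasing or both decreasing) functions f, g depending on disjoint subsets of indices, E[f(X)·g(X)] ≤ E[f(X)]·E[g(X)]. -/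
/-- `f` depends only on the coordinates indexed by `S`. -/
def DependsOnCoords {N : ℕ} (f : (Fin N → ℝ) → ℝ) (S : Finset (Fin N)) : Prop :=
  ∀ x y : Fin N → ℝ, (∀ i ∈ S, x i = y i) → f x = f y

/-!
Since `u ≥ 0`, `x ↦ f (u * x)` is monotone whenever `f` is, so it suffices to show that a
uniformly random rearrangement `w ∘ π` of a fixed vector is negatively associated.
With `F π = f (w ∘ π)` and `G π = g (w ∘ π)`, the correlation `Φ ρ = ∑ π, F π * G (π * ρ)`
satisfies `Φ 1 = ∑ F G` and `∑ ρ, Φ ρ = (∑ F) (∑ G)`, so it suffices that `Φ 1 ≤ Φ ρ` for all `ρ`.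
Replacing `ρ` by `swap s a * ρ`, with `a ∉ S ∪ ρ '' T`, does not increase `Φ`: pairing `π` with
`π * swap s a`, both `F` and `G (· * ρ)` are larger for the member of the pair that puts the
larger of the two values `w (π s)`, `w (π a)` at `s`, and the rearrangement inequality applies.
These swaps empty `ρ '' T ∩ S`; after that a permutation fixing `S` pointwise brings `ρ` to the
identity on `T` without changing `Φ`.
-/

open Finset Equiv

section Correlation

variable {G : Type*} [Group G] [Fintype G]

def correlation (φ ψ : G → ℝ) (ρ : G) : ℝ := ∑ π, φ π * ψ (π * ρ)

variable {φ ψ : G → ℝ}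

theorem correlation_one : correlation φ ψ 1 = ∑ π, φ π * ψ π := by
  simp only [correlation, mul_one]

theorem sum_correlation : ∑ ρ, correlation φ ψ ρ = (∑ π, φ π) * ∑ π, ψ π := by
  simp only [correlation]
  rw [Fintype.sum_mul_sum, Finset.sum_comm]
  exact sum_congr rfl fun π _ => Equiv.sum_comp (Equiv.mulLeft π) fun σ => φ π * ψ σ

theorem correlation_mul_left_of_forall_mul_right_eq {σ : G} (hσ : ∀ π, φ (π * σ) = φ π)
    (ρ : G) : correlation φ ψ (σ * ρ) = correlation φ ψ ρ := by
  unfold correlation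
  conv_rhs => rw [← Equiv.sum_comp (Equiv.mulRight σ)]
  simp only [coe_mulRight, hσ, mul_assoc]

/-- Reindexing by `π ↦ π * τ` shows that the sum of the terms in `h` is
`2 * (correlation φ ψ ρ - correlation φ ψ (τ * ρ))`. -/
theorem correlation_mul_left_le {τ ρ : G} (hτ : τ * τ = 1)
    (h : ∀ π, 0 ≤ (φ π - φ (π * τ)) * (ψ (π * ρ) - ψ (π * τ * ρ))) :
    correlation φ ψ (τ * ρ) ≤ correlation φ ψ ρ := by
  have hττ : ∀ x, τ * (τ * x) = x := fun x => by rw [← mul_assoc, hτ, one_mul]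
  have e₁ := Equiv.sum_comp (Equiv.mulRight τ) fun π => φ π * ψ (π * ρ)
  have e₂ := Equiv.sum_comp (Equiv.mulRight τ) fun π => φ π * ψ (π * τ * ρ)
  simp only [coe_mulRight, mul_assoc, hττ] at e₁ e₂
  have hnonneg := sum_nonneg fun π (_ : π ∈ univ) => h π
  simp only [sub_mul, mul_sub, sum_sub_distrib, mul_assoc] at hnonneg
  unfold correlation
  linarith

end Correlation

theorem Monotone.le_of_dependsOn {ι α β : Type*} [Preorder α] [Preorder β]
    {f : (ι → α) → β} (hf : Monotone f) {S : Set ι} (hS : DependsOn f S) {x y : ι → α}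
    (h : ∀ i ∈ S, x i ≤ y i) : f x ≤ f y := by
  classical
  calc f x = f (S.piecewise x y) := hS fun i hi => (Set.piecewise_eq_of_mem S x y hi).symm
    _ ≤ f y := hf fun i => by
      by_cases hi : i ∈ S
      · simpa [Set.piecewise_eq_of_mem S x y hi] using h i hi
      · simp [Set.piecewise_eq_of_notMem S x y hi]

theorem exists_notMem_union_image_of_disjoint {ι : Type*} [Fintype ι] [DecidableEq ι]
    {S T : Finset ι} (hST : Disjoint S T) (ρ : Perm ι)
    (h : (T.image ρ ∩ S).Nonempty) : ∃ a, a ∉ S ∧ a ∉ T.image ρ := by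
  have hcard : #(S ∪ T.image ρ) < #(univ : Finset ι) := by
    have := card_union_add_card_inter S (T.image ρ)
    rw [card_image_of_injective T ρ.injective] at this
    have hST' := card_le_univ (S ∪ T)
    rw [card_union_of_disjoint hST] at hST'
    have := card_pos.2 (inter_comm (T.image ρ) S ▸ h)
    rw [card_univ]
    omega
  obtain ⟨a, -, ha⟩ := exists_mem_notMem_of_card_lt_card hcard
  exact ⟨a, fun h => ha (mem_union_left _ h), fun h => ha (mem_union_right _ h)⟩

theorem Monotone.apply_comp_mul_swap_mul_le {ι α β : Type*} [DecidableEq ι] [Preorder α]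
    [Preorder β] {f : (ι → α) → β} (hf : Monotone f) (w : ι → α) {U : Set ι} (hU : DependsOn f U)
    {π ρ : Perm ι} {s a : ι} (ha : ∀ i ∈ U, ρ i ≠ a) (hle : w (π a) ≤ w (π s)) :
    f (w ∘ ⇑(π * swap s a * ρ)) ≤ f (w ∘ ⇑(π * ρ)) := by
  refine hf.le_of_dependsOn hU fun i hi => ?_
  simp only [Function.comp_apply, Perm.mul_apply]
  rcases eq_or_ne (ρ i) s with h | h
  · rw [h, swap_apply_left]
    exact hle
  · rw [swap_apply_of_ne_of_ne h (ha i hi)]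

section PermutationSample

variable {ι α : Type*} [Fintype ι] [DecidableEq ι] (w : ι → α) {f g : (ι → α) → ℝ}

theorem correlation_eq_correlation_one {S T : Set ι} (hST : Disjoint S T)
    (hfS : DependsOn f S) (hgT : DependsOn g T) {ρ : Perm ι} (hρ : ∀ t ∈ T, ρ t ∉ S) :
    correlation (fun π : Perm ι => f (w ∘ ⇑π)) (fun π => g (w ∘ ⇑π)) ρ =
      correlation (fun π : Perm ι => f (w ∘ ⇑π)) (fun π => g (w ∘ ⇑π)) 1 := by
  obtain ⟨σ, hσ⟩ := Perm.exists_extending_pair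
    (Sum.elim (fun s : S => (s : ι)) fun t : T => ρ t) (Sum.elim (fun s : S => (s : ι)) (↑))
    (Subtype.val_injective.sumElim (ρ.injective.comp Subtype.val_injective)
      fun s t h => hρ t t.2 (h ▸ s.2))
    (Subtype.val_injective.sumElim Subtype.val_injective
      fun s t h => Set.disjoint_left.1 hST s.2 (h ▸ t.2))
  have hσS : ∀ s ∈ S, σ s = s := fun s hs => hσ (Sum.inl ⟨s, hs⟩)
  have hσT : ∀ t ∈ T, σ (ρ t) = t := fun t ht => hσ (Sum.inr ⟨t, ht⟩)
  rw [← correlation_mul_left_of_forall_mul_right_eq (σ := σ)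
    fun π => hfS fun i hi => by simp [hσS i hi]]
  refine sum_congr rfl fun π _ => congrArg _ (hgT fun t ht => ?_)
  simp [hσT t ht]

variable [LinearOrder α]

theorem correlation_swap_mul_le (hf : Monotone f) (hg : Monotone g) {S T : Set ι}
    (hfS : DependsOn f S) (hgT : DependsOn g T) {ρ : Perm ι} {s a : ι} (haS : a ∉ S)
    (haT : ∀ t ∈ T, ρ t ≠ a) :
    correlation (fun π : Perm ι => f (w ∘ ⇑π)) (fun π => g (w ∘ ⇑π)) (swap s a * ρ) ≤
      correlation (fun π : Perm ι => f (w ∘ ⇑π)) (fun π => g (w ∘ ⇑π)) ρ := by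
  have hF : ∀ π : Perm ι, w (π a) ≤ w (π s) → f (w ∘ ⇑(π * swap s a)) ≤ f (w ∘ ⇑π) :=
    fun π hle => by
      simpa using hf.apply_comp_mul_swap_mul_le w hfS (ρ := 1)
        (fun i hi (h : i = a) => haS (h ▸ hi)) hle
  have hG : ∀ π : Perm ι, w (π a) ≤ w (π s) →
      g (w ∘ ⇑(π * swap s a * ρ)) ≤ g (w ∘ ⇑(π * ρ)) :=
    fun π hle => hg.apply_comp_mul_swap_mul_le w hgT haT hle
  refine correlation_mul_left_le (swap_mul_self s a) fun π => ?_
  rcases le_total (w (π a)) (w (π s)) with hle | hle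
  · exact mul_nonneg (sub_nonneg.2 (hF π hle)) (sub_nonneg.2 (hG π hle))
  · have hle' : w ((π * swap s a) a) ≤ w ((π * swap s a) s) := by simpa using hle
    have hππ : π * swap s a * swap s a = π := by rw [mul_assoc, swap_mul_self, mul_one]
    have hF' := hF _ hle'
    have hG' := hG _ hle'
    rw [hππ] at hF' hG'
    exact mul_nonneg_of_nonpos_of_nonpos (sub_nonpos.2 hF') (sub_nonpos.2 hG')

theorem correlation_one_le (hf : Monotone f) (hg : Monotone g) {S T : Finset ι}
    (hST : Disjoint S T) (hfS : DependsOn f S) (hgT : DependsOn g T) (ρ : Perm ι) :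
    correlation (fun π : Perm ι => f (w ∘ ⇑π)) (fun π => g (w ∘ ⇑π)) 1 ≤
      correlation (fun π : Perm ι => f (w ∘ ⇑π)) (fun π => g (w ∘ ⇑π)) ρ := by
  induction hn : #(T.image ρ ∩ S) using Nat.strong_induction_on generalizing ρ with
  | _ n ih =>
  rcases (T.image ρ ∩ S).eq_empty_or_nonempty with hempty | hne
  · refine (correlation_eq_correlation_one w (disjoint_coe.2 hST) hfS hgT fun t ht hS => ?_).ge
    exact (eq_empty_iff_forall_notMem.1 hempty) (ρ t) (mem_inter.2 ⟨mem_image_of_mem ρ ht, hS⟩)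
  obtain ⟨s, hs⟩ := hne
  obtain ⟨a, haS, haT⟩ := exists_notMem_union_image_of_disjoint hST ρ ⟨s, hs⟩
  have haT' : ∀ t ∈ T, ρ t ≠ a := fun t ht h => haT (h ▸ mem_image_of_mem ρ ht)
  have hsub : T.image (swap s a * ρ) ∩ S ⊆ (T.image ρ ∩ S).erase s := by
    intro x hx
    obtain ⟨⟨t, ht, rfl⟩, hxS⟩ := mem_inter.1 hx |>.imp_left mem_image.1
    have hts : ρ t ≠ s := fun h => haS (by simpa [h] using hxS)
    rw [Perm.mul_apply, swap_apply_of_ne_of_ne hts (haT' t ht)] at hxS ⊢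
    exact mem_erase.2 ⟨hts, mem_inter.2 ⟨mem_image_of_mem ρ ht, hxS⟩⟩
  have hlt : #(T.image (swap s a * ρ) ∩ S) < n :=
    hn ▸ (card_le_card hsub).trans_lt (card_erase_lt_of_mem hs)
  exact (ih _ hlt _ rfl).trans (correlation_swap_mul_le w hf hg hfS hgT haS haT')

theorem card_mul_sum_mul_le_sum_mul_sum_of_monotone (hf : Monotone f) (hg : Monotone g)
    {S T : Finset ι} (hST : Disjoint S T) (hfS : DependsOn f S) (hgT : DependsOn g T) :
    (Fintype.card (Perm ι) : ℝ) * ∑ π : Perm ι, f (w ∘ ⇑π) * g (w ∘ ⇑π) ≤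
      (∑ π : Perm ι, f (w ∘ ⇑π)) * ∑ π : Perm ι, g (w ∘ ⇑π) := by
  rw [← correlation_one, ← sum_correlation, ← card_univ, ← nsmul_eq_mul, ← sum_const]
  exact sum_le_sum fun ρ _ => correlation_one_le w hf hg hST hfS hgT ρ

theorem card_mul_sum_mul_le_sum_mul_sum_of_antitone (hf : Antitone f) (hg : Antitone g)
    {S T : Finset ι} (hST : Disjoint S T) (hfS : DependsOn f S) (hgT : DependsOn g T) :
    (Fintype.card (Perm ι) : ℝ) * ∑ π : Perm ι, f (w ∘ ⇑π) * g (w ∘ ⇑π) ≤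
      (∑ π : Perm ι, f (w ∘ ⇑π)) * ∑ π : Perm ι, g (w ∘ ⇑π) := by
  simpa only [neg_mul_neg, sum_neg_distrib] using
    card_mul_sum_mul_le_sum_mul_sum_of_monotone w hf.neg hg.neg hST
      (fun x y h => congrArg Neg.neg (hfS h)) fun x y h => congrArg Neg.neg (hgT h)

end PermutationSample

theorem stmt1_general (N : ℕ) (u v : Fin N → ℝ) (hu : ∀ i, 0 ≤ u i)
    (f g : (Fin N → ℝ) → ℝ) (S T : Finset (Fin N)) (hST : Disjoint S T)
    (hfS : DependsOnCoords f S) (hgT : DependsOnCoords g T)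
    (hmono : (Monotone f ∧ Monotone g) ∨ (Antitone f ∧ Antitone g)) :
    (∑ π : Equiv.Perm (Fin N), f (fun i => u i * v (π i)) * g (fun i => u i * v (π i))) /
        (Fintype.card (Equiv.Perm (Fin N)) : ℝ) ≤
      ((∑ π : Equiv.Perm (Fin N), f (fun i => u i * v (π i))) /
          (Fintype.card (Equiv.Perm (Fin N)) : ℝ)) *
        ((∑ π : Equiv.Perm (Fin N), g (fun i => u i * v (π i))) /
          (Fintype.card (Equiv.Perm (Fin N)) : ℝ)) := by
  have hscale : Monotone fun (x : Fin N → ℝ) i => u i * x i :=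
    fun x y h i => mul_le_mul_of_nonneg_left (h i) (hu i)
  have hdep : ∀ {h : (Fin N → ℝ) → ℝ} {U : Finset (Fin N)}, DependsOnCoords h U →
      DependsOn (fun x => h fun i => u i * x i) U :=
    fun hU x y hxy => hU _ _ fun i hi => by rw [hxy i hi]
  have key : (Fintype.card (Perm (Fin N)) : ℝ) *
      ∑ π : Perm (Fin N), f (fun i => u i * v (π i)) * g (fun i => u i * v (π i)) ≤
      (∑ π : Perm (Fin N), f (fun i => u i * v (π i))) *
        ∑ π : Perm (Fin N), g (fun i => u i * v (π i)) := by
    rcases hmono with ⟨hf, hg⟩ | ⟨hf, hg⟩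
    · exact card_mul_sum_mul_le_sum_mul_sum_of_monotone v (hf.comp hscale) (hg.comp hscale) hST
        (hdep hfS) (hdep hgT)
    · exact card_mul_sum_mul_le_sum_mul_sum_of_antitone v (hf.comp_monotone hscale)
        (hg.comp_monotone hscale) hST (hdep hfS) (hdep hgT)
  have hcard : (0 : ℝ) < Fintype.card (Perm (Fin N)) := by exact_mod_cast Fintype.card_pos
  rw [div_mul_div_comm, div_le_div_iff₀ hcard (by positivity)]
  linarith [mul_le_mul_of_nonneg_right key hcard.le]

theorem stmt1 (N : ℕ) (u v : Fin N → ℝ) (hu : ∀ i, 0 ≤ u i) (hv : ∀ i, 0 ≤ v i)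
    (f g : (Fin N → ℝ) → ℝ) (S T : Finset (Fin N)) (hST : Disjoint S T)
    (hfS : DependsOnCoords f S) (hgT : DependsOnCoords g T)
    (hmono : (Monotone f ∧ Monotone g) ∨ (Antitone f ∧ Antitone g)) :
    (∑ π : Equiv.Perm (Fin N), f (fun i => u i * v (π i)) * g (fun i => u i * v (π i))) /
        (Fintype.card (Equiv.Perm (Fin N)) : ℝ) ≤
      ((∑ π : Equiv.Perm (Fin N), f (fun i => u i * v (π i))) /
          (Fintype.card (Equiv.Perm (Fin N)) : ℝ)) *
        ((∑ π : Equiv.Perm (Fin N), g (fun i => u i * v (π i))) /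
          (Fintype.card (Equiv.Perm (Fin N)) : ℝ)) :=
  stmt1_general N u v hu f g S T hST hfS hgT hmono
end

section
/- Let u, v ∈ (ℝ_{≥0})^N be non-zero non-negative vectors with (‖u‖₁/‖u‖_∞)·(‖v‖₁/‖v‖_∞) ≥ C·N for some C ≥ 1, and let σ be a fixed permutation of [N]. If τ is a uniformly random permutation of [N], then for any γ > 0, Pr[∑_{i : σ(i)≠i} u_i v_{τ(σ(i))} ≥ e^γ · ‖u‖₁‖v‖₁/N] ≤ exp(−γ²C/2). -/
/-!
Chernoff's method. With `M = ‖u‖_∞ ‖v‖_∞` and `t = γ / M`, Markov's inequality bounds the number of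
bad `τ` by `e^{-ta} ∑_τ exp (t ∑_i u_i v_{τ(σ i)})`; the terms with `σ i = i` only enlarge the sum.
For a uniform permutation the `u_i v_{τ i}` are negatively associated: the average over `τ` of
`∏_i f_i (v_{τ i})` is at most the product of the averages of the `f_i (v_j)` over `j`, for
nonnegative monotone `f_i`. This follows by conditioning on `τ i₀` and Chebyshev's sum inequality.
Convexity of `exp` and `1 + x ≤ eˣ` bound each factor, leaving the exponent
`m (e^γ - 1 - γ e^γ) ≤ -γ² m / 2` with `m = ‖u‖₁ ‖v‖₁ / (N M) ≥ C`.
-/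

open scoped Classical

/-- The ℓ¹ norm of a vector. -/
noncomputable def nl1 {N : ℕ} (u : Fin N → ℝ) : ℝ := ∑ i, |u i|

/-- The ℓ∞ norm of a vector. -/
noncomputable def nlinf {N : ℕ} (u : Fin N → ℝ) : ℝ := ⨆ i, |u i|

open Finset Real
open scoped Nat

section NegativeAssociation

variable {ι β : Type*} [Fintype ι] [DecidableEq ι] [LinearOrder β]
  (v : ι → β) {f : ι → β → ℝ}

lemma sum_fiber_prod_le_of_le (hf0 : ∀ i x, 0 ≤ f i x) (hf : ∀ i, Monotone (f i))
    {i₀ : ι} {B : Finset ι} (hi₀ : i₀ ∉ B) {j j' : ι} (hv : v j ≤ v j') :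
    ∑ τ ∈ univ.filter (fun τ : Equiv.Perm ι => τ i₀ = j'), ∏ i ∈ B, f i (v (τ i)) ≤
      ∑ τ ∈ univ.filter (fun τ : Equiv.Perm ι => τ i₀ = j), ∏ i ∈ B, f i (v (τ i)) := by
  calc _ ≤ ∑ τ ∈ univ.filter (fun τ : Equiv.Perm ι => τ i₀ = j'),
          ∏ i ∈ B, f i (v ((Equiv.swap j j' * τ) i)) := by
        refine sum_le_sum fun τ hτ => prod_le_prod (fun i _ => hf0 i _) fun i hi => ?_
        have hτi : τ i ≠ j' := fun h =>
          hi₀ (τ.injective (h.trans (mem_filter.1 hτ).2.symm) ▸ hi)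
        rcases eq_or_ne (τ i) j with h | h
        · simpa [h] using hf i hv
        · simp [Equiv.swap_apply_of_ne_of_ne h hτi]
    _ = _ := by
        refine sum_nbij' (Equiv.swap j j' * ·) (Equiv.swap j j' * ·) ?_ ?_ ?_ ?_ fun _ _ => rfl
        all_goals intro τ; simp +contextual [← mul_assoc]

theorem card_pow_mul_sum_perm_prod_le (hf0 : ∀ i x, 0 ≤ f i x) (hf : ∀ i, Monotone (f i))
    (A : Finset ι) :
    (Fintype.card ι : ℝ) ^ #A * ∑ τ : Equiv.Perm ι, ∏ i ∈ A, f i (v (τ i)) ≤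
      (Fintype.card ι)! * ∏ i ∈ A, ∑ j, f i (v j) := by
  induction A using Finset.induction with
  | empty => simp [Fintype.card_perm]
  | @insert i₀ B hi₀ ih =>
    set Q : ι → ℝ := fun j =>
      ∑ τ ∈ univ.filter (fun τ : Equiv.Perm ι => τ i₀ = j), ∏ i ∈ B, f i (v (τ i))
    have hsplit : ∑ τ : Equiv.Perm ι, ∏ i ∈ insert i₀ B, f i (v (τ i)) =
        ∑ j, Q j * f i₀ (v j) := by
      rw [← sum_fiberwise univ (· i₀)]
      refine sum_congr rfl fun j _ => ?_
      rw [sum_mul]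
      refine sum_congr rfl fun τ hτ => ?_
      rw [prod_insert hi₀, (mem_filter.1 hτ).2, mul_comm]
    have hQsum : ∑ j, Q j = ∑ τ : Equiv.Perm ι, ∏ i ∈ B, f i (v (τ i)) :=
      sum_fiberwise _ _ _
    -- if `τ i₀` takes a larger value of `v`, the remaining coordinates can only take smaller ones
    have hanti : Antivary Q (fun j => f i₀ (v j)) := fun j j' hlt =>
      sum_fiber_prod_le_of_le v hf0 hf hi₀ ((hf i₀).reflect_lt hlt).le
    calc (Fintype.card ι : ℝ) ^ #(insert i₀ B) *
          ∑ τ : Equiv.Perm ι, ∏ i ∈ insert i₀ B, f i (v (τ i))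
        = (Fintype.card ι : ℝ) ^ #B * (Fintype.card ι * ∑ j, Q j * f i₀ (v j)) := by
          rw [card_insert_of_notMem hi₀, hsplit]; ring
      _ ≤ (Fintype.card ι : ℝ) ^ #B * ((∑ j, Q j) * ∑ j, f i₀ (v j)) :=
          mul_le_mul_of_nonneg_left hanti.card_mul_sum_le_sum_mul_sum (by positivity)
      _ = (∑ j, f i₀ (v j)) * ((Fintype.card ι : ℝ) ^ #B * ∑ j, Q j) := by ring
      _ ≤ (∑ j, f i₀ (v j)) * ((Fintype.card ι)! * ∏ i ∈ B, ∑ j, f i (v j)) := by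
          rw [hQsum]; gcongr; exact sum_nonneg fun j _ => hf0 i₀ _
      _ = (Fintype.card ι)! * ∏ i ∈ insert i₀ B, ∑ j, f i (v j) := by
          rw [prod_insert hi₀]; ring

end NegativeAssociation

lemma exp_mul_le_one_add_mul_exp_sub_one {s : ℝ} (hs0 : 0 ≤ s) (hs1 : s ≤ 1) (γ : ℝ) :
    exp (s * γ) ≤ 1 + s * (exp γ - 1) := by
  have := convexOn_exp.2 (Set.mem_univ 0) (Set.mem_univ γ) (sub_nonneg.2 hs1) hs0 (by ring)
  simp only [smul_eq_mul, mul_zero, zero_add, exp_zero, mul_one] at this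
  linarith

lemma sum_exp_mul_le {κ : Type*} [Fintype κ] [Nonempty κ] {w : κ → ℝ} (hw0 : ∀ j, 0 ≤ w j)
    (hw1 : ∀ j, w j ≤ 1) (γ : ℝ) :
    ∑ j, exp (w j * γ) ≤ Fintype.card κ * exp ((∑ j, w j) * (exp γ - 1) / Fintype.card κ) := by
  have hn : (0 : ℝ) < Fintype.card κ := by exact_mod_cast Fintype.card_pos
  calc ∑ j, exp (w j * γ) ≤ ∑ j, (1 + w j * (exp γ - 1)) :=
        sum_le_sum fun j _ => exp_mul_le_one_add_mul_exp_sub_one (hw0 j) (hw1 j) γ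
    _ = Fintype.card κ * ((∑ j, w j) * (exp γ - 1) / Fintype.card κ + 1) := by
        rw [sum_add_distrib, ← sum_mul, sum_const, card_univ, nsmul_one]
        field_simp
        ring
    _ ≤ _ := by gcongr; exact add_one_le_exp _

theorem sum_perm_exp_le {ι : Type*} [Fintype ι] [DecidableEq ι] [Nonempty ι] {u v : ι → ℝ}
    (hu : ∀ i, 0 ≤ u i) (hv : ∀ j, 0 ≤ v j) {M : ℝ} (huv : ∀ i j, u i * v j ≤ M) {γ : ℝ}
    (hγ : 0 ≤ γ) :
    ∑ τ : Equiv.Perm ι, exp (γ / M * ∑ i, u i * v (τ i)) ≤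
      (Fintype.card ι)! * exp ((∑ i, u i) * (∑ j, v j) / (Fintype.card ι * M) * (exp γ - 1)) := by
  set n := Fintype.card ι
  have hn : (0 : ℝ) < n := by exact_mod_cast Fintype.card_pos
  have i₀ := Classical.arbitrary ι
  have hM : 0 ≤ M := (mul_nonneg (hu i₀) (hv i₀)).trans (huv i₀ i₀)
  set f : ι → ℝ → ℝ := fun i x => exp (γ / M * u i * x)
  have hf : ∀ i, Monotone (f i) := fun i x y hxy =>
    exp_le_exp.2 (mul_le_mul_of_nonneg_left hxy (mul_nonneg (div_nonneg hγ hM) (hu i)))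
  have hfactor (i : ι) : ∑ j, f i (v j) ≤
      n * exp ((∑ j, u i * v j / M) * (exp γ - 1) / n) := by
    refine le_of_eq_of_le (sum_congr rfl fun j _ => ?_) (sum_exp_mul_le
      (fun j => div_nonneg (mul_nonneg (hu i) (hv j)) hM)
      (fun j => div_le_one_of_le₀ (huv i j) hM) γ)
    simp only [f]; ring_nf
  have hprod : ∏ i, ∑ j, f i (v j) ≤
      n ^ n * exp ((∑ i, u i) * (∑ j, v j) / (n * M) * (exp γ - 1)) := by
    refine (prod_le_prod (fun i _ => sum_nonneg fun j _ => (exp_pos _).le)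
      fun i _ => hfactor i).trans_eq ?_
    rw [prod_mul_distrib, prod_const, card_univ, ← exp_sum]
    congr 2
    simp only [sum_mul_sum, ← sum_div, ← sum_mul]
    ring
  have hNA := card_pow_mul_sum_perm_prod_le v (fun i x => (exp_pos _).le) hf univ
  rw [card_univ] at hNA
  refine le_of_mul_le_mul_left ?_ (pow_pos hn n)
  calc (n : ℝ) ^ n * ∑ τ : Equiv.Perm ι, exp (γ / M * ∑ i, u i * v (τ i))
      = n ^ n * ∑ τ : Equiv.Perm ι, ∏ i, f i (v (τ i)) := by
        simp only [f, mul_sum, ← exp_sum, mul_assoc]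
    _ ≤ n ! * ∏ i, ∑ j, f i (v j) := hNA
    _ ≤ n ! * (n ^ n * exp ((∑ i, u i) * (∑ j, v j) / (n * M) * (exp γ - 1))) := by gcongr
    _ = _ := by ring

lemma exp_sub_one_sub_mul_exp_le {x : ℝ} (hx : 0 ≤ x) : exp x - 1 - x * exp x ≤ -(x ^ 2 / 2) := by
  let g : ℝ → ℝ := fun y => y * exp y - exp y + 1 - y ^ 2 / 2
  have hg (y : ℝ) : HasDerivAt g (y * (exp y - 1)) y := by
    refine (((((hasDerivAt_id' y).mul (hasDerivAt_exp y)).sub (hasDerivAt_exp y)).add_const 1).sub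
      ((hasDerivAt_pow 2 y).div_const 2)).congr_deriv ?_
    ring
  have hmono : Monotone g := monotone_of_deriv_nonneg (fun y => (hg y).differentiableAt) fun y => by
    rw [(hg y).deriv]
    rcases le_total 0 y with h | h
    · exact mul_nonneg h (sub_nonneg.2 (one_le_exp h))
    · exact mul_nonneg_of_nonpos_of_nonpos h (sub_nonpos.2 (exp_le_one_iff.2 h))
  have := hmono hx
  simp only [g, zero_mul, exp_zero, ne_eq, OfNat.ofNat_ne_zero, not_false_eq_true, zero_pow,
    zero_div] at this
  linarith

lemma card_filter_le_exp_mul_sum_exp {α : Type*} [Fintype α] {f g : α → ℝ} (hfg : ∀ x, f x ≤ g x)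
    {t : ℝ} (ht : 0 ≤ t) (a : ℝ) :
    (#{x | a ≤ f x} : ℝ) ≤ exp (-(t * a)) * ∑ x, exp (t * g x) := by
  rw [natCast_card_filter, mul_sum]
  refine sum_le_sum fun x _ => ?_
  rw [← exp_add]
  split_ifs with h
  · exact one_le_exp (by nlinarith [hfg x])
  · exact (exp_pos _).le

lemma nl1_eq_sum {N : ℕ} {u : Fin N → ℝ} (hu : ∀ i, 0 ≤ u i) : nl1 u = ∑ i, u i :=
  sum_congr rfl fun i _ => abs_of_nonneg (hu i)

lemma abs_le_nlinf {N : ℕ} (u : Fin N → ℝ) (i : Fin N) : |u i| ≤ nlinf u :=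
  le_ciSup (f := fun k => |u k|) (Set.finite_range _).bddAbove i

lemma mul_le_nlinf_mul_nlinf {N : ℕ} (u v : Fin N → ℝ) (i j : Fin N) :
    u i * v j ≤ nlinf u * nlinf v :=
  (le_abs_self _).trans <| (abs_mul _ _).trans_le <| mul_le_mul (abs_le_nlinf u i)
    (abs_le_nlinf v j) (abs_nonneg _) ((abs_nonneg _).trans (abs_le_nlinf u i))

lemma nlinf_pos {N : ℕ} {u : Fin N → ℝ} (hu0 : u ≠ 0) : 0 < nlinf u := by
  obtain ⟨i, hi⟩ := Function.ne_iff.1 hu0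
  exact (abs_pos.2 hi).trans_le (abs_le_nlinf u i)

theorem stmt7_general (N : ℕ) (C γ : ℝ) (hγ : 0 < γ)
    (u v : Fin N → ℝ) (hu : ∀ i, 0 ≤ u i) (hv : ∀ i, 0 ≤ v i)
    (hu0 : u ≠ 0) (hv0 : v ≠ 0)
    (hratio : C * N ≤ (nl1 u / nlinf u) * (nl1 v / nlinf v))
    (σ : Equiv.Perm (Fin N)) :
    ((Finset.univ.filter (fun τ : Equiv.Perm (Fin N) =>
          Real.exp γ * (nl1 u * nl1 v / N) ≤
            ∑ i ∈ Finset.univ.filter (fun i => σ i ≠ i), u i * v (τ (σ i)))).card : ℝ) /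
        (Fintype.card (Equiv.Perm (Fin N)) : ℝ) ≤ Real.exp (-(γ ^ 2 * C) / 2) := by
  have : Nonempty (Fin N) := ⟨(Function.ne_iff.1 hu0).choose⟩
  have hN : (0 : ℝ) < N := by exact_mod_cast Fin.pos'
  set M := nlinf u * nlinf v
  have hM : 0 < M := mul_pos (nlinf_pos hu0) (nlinf_pos hv0)
  set m := nl1 u * nl1 v / (N * M)
  have hm0 : 0 ≤ m := by simp only [m, M, nl1]; positivity
  have hCm : C ≤ m := by
    rw [le_div_iff₀ (by positivity), ← mul_assoc, ← le_div_iff₀ hM]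
    rwa [div_mul_div_comm] at hratio
  have hmgf : ∑ τ : Equiv.Perm (Fin N), exp (γ / M * ∑ i, u i * v (τ (σ i))) ≤
      N ! * exp (m * (exp γ - 1)) := by
    rw [Fintype.sum_equiv (Equiv.mulRight σ)
      (fun τ => exp (γ / M * ∑ i, u i * v (τ (σ i))))
      (fun τ => exp (γ / M * ∑ i, u i * v (τ i))) fun τ => rfl]
    simpa [nl1_eq_sum hu, nl1_eq_sum hv, m] using sum_perm_exp_le hu hv (mul_le_nlinf_mul_nlinf u v) hγ.le
  have hchernoff := card_filter_le_exp_mul_sum_exp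
    (g := fun τ : Equiv.Perm (Fin N) => ∑ i, u i * v (τ (σ i)))
    (fun τ => sum_le_sum_of_subset_of_nonneg (filter_subset (fun i => σ i ≠ i) univ)
      fun i _ _ => mul_nonneg (hu i) (hv (τ (σ i))))
    (div_nonneg hγ.le hM.le) (exp γ * (nl1 u * nl1 v / N))
  have hta : γ / M * (exp γ * (nl1 u * nl1 v / N)) = γ * exp γ * m := by
    simp only [m]; field_simp
  rw [Fintype.card_perm, Fintype.card_fin, div_le_iff₀ (by positivity)]
  calc _ ≤ exp (-(γ * exp γ * m)) * (N ! * exp (m * (exp γ - 1))) := by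
        rw [← hta]; exact hchernoff.trans (by gcongr)
    _ = N ! * exp (m * (exp γ - 1 - γ * exp γ)) := by rw [mul_left_comm, ← exp_add]; ring_nf
    _ ≤ N ! * exp (-(γ ^ 2 * C) / 2) := by
        gcongr
        nlinarith [mul_le_mul_of_nonneg_left (exp_sub_one_sub_mul_exp_le hγ.le) hm0,
          mul_le_mul_of_nonneg_right hCm (sq_nonneg γ)]
    _ = _ := mul_comm _ _

theorem stmt7 (N : ℕ) (C γ : ℝ) (hC : 1 ≤ C) (hγ : 0 < γ)
    (u v : Fin N → ℝ) (hu : ∀ i, 0 ≤ u i) (hv : ∀ i, 0 ≤ v i)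
    (hu0 : u ≠ 0) (hv0 : v ≠ 0)
    (hratio : C * N ≤ (nl1 u / nlinf u) * (nl1 v / nlinf v))
    (σ : Equiv.Perm (Fin N)) :
    ((Finset.univ.filter (fun τ : Equiv.Perm (Fin N) =>
          Real.exp γ * (nl1 u * nl1 v / N) ≤
            ∑ i ∈ Finset.univ.filter (fun i => σ i ≠ i), u i * v (τ (σ i)))).card : ℝ) /
        (Fintype.card (Equiv.Perm (Fin N)) : ℝ) ≤ Real.exp (-(γ ^ 2 * C) / 2) :=
  stmt7_general N C γ hγ u v hu hv hu0 hv0 hratio σ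
end

section
/- Let u = v = (1,1,0,0)ᵀ ∈ ℝ⁴ and let σ = (1 2)(3 4). Define X_1 = u_{τ(1)} v_{τ(σ(1))} and X_2 = u_{τ(2)} v_{τ(σ(2))} where τ is a uniformly random permutation of {1,2,3,4}. Then E[X_1 X_2] = 1/6 > E[X_1]·E[X_2], so X_1, X_2 are not negatively associated. -/
/-
Since σ swaps 1 and 2, both variables equal u_{τ(1)} u_{τ(2)}, the indicator that τ maps {1, 2}
onto itself. So X_1 X_2 = X_1, and E[X_1] = 2! · 2! / 4! = 1/6, whence
E[X_1 X_2] = 1/6 > 1/36 = E[X_1] E[X_2].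
-/

lemma isIdempotentElem_vec_one_one_zero_zero (i : Fin 4) :
    IsIdempotentElem ((![1, 1, 0, 0] : Fin 4 → ℝ) i) := by
  fin_cases i <;> simp [IsIdempotentElem]

lemma sum_perm_vec_one_one_zero_zero :
    ∑ τ : Equiv.Perm (Fin 4), (![1, 1, 0, 0] : Fin 4 → ℝ) (τ 0) * ![1, 1, 0, 0] (τ 1) = 4 := by
  have hcast (i : Fin 4) : ((![1, 1, 0, 0] : Fin 4 → ℕ) i : ℝ) = ![1, 1, 0, 0] i := by
    fin_cases i <;> simp
  have hnat : ∑ τ : Equiv.Perm (Fin 4), (![1, 1, 0, 0] : Fin 4 → ℕ) (τ 0) * ![1, 1, 0, 0] (τ 1)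
      = 4 := by decide
  simpa only [Nat.cast_sum, Nat.cast_mul, hcast, Nat.cast_ofNat] using congrArg (Nat.cast (R := ℝ)) hnat

theorem stmt10 :
    let u : Fin 4 → ℝ := ![1, 1, 0, 0]
    let σ : Equiv.Perm (Fin 4) := Equiv.swap 0 1 * Equiv.swap 2 3
    (∑ τ : Equiv.Perm (Fin 4), (u (τ 0) * u (τ (σ 0))) * (u (τ 1) * u (τ (σ 1)))) /
        (Fintype.card (Equiv.Perm (Fin 4)) : ℝ) = 1 / 6 ∧
      ((∑ τ : Equiv.Perm (Fin 4), u (τ 0) * u (τ (σ 0))) /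
            (Fintype.card (Equiv.Perm (Fin 4)) : ℝ)) *
          ((∑ τ : Equiv.Perm (Fin 4), u (τ 1) * u (τ (σ 1))) /
            (Fintype.card (Equiv.Perm (Fin 4)) : ℝ)) < 1 / 6 := by
  intro u σ
  have hσ0 : σ 0 = 1 := by decide
  have hσ1 : σ 1 = 0 := by decide
  have hX₂ (τ : Equiv.Perm (Fin 4)) : u (τ 1) * u (τ 0) = u (τ 0) * u (τ 1) := mul_comm _ _
  have hX₁X₂ (τ : Equiv.Perm (Fin 4)) : u (τ 0) * u (τ 1) * (u (τ 0) * u (τ 1)) = u (τ 0) * u (τ 1) :=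
    ((isIdempotentElem_vec_one_one_zero_zero _).mul
      (isIdempotentElem_vec_one_one_zero_zero _)).eq
  simp only [hσ0, hσ1, hX₂, hX₁X₂, u, sum_perm_vec_one_one_zero_zero, Fintype.card_perm,
    Fintype.card_fin]
  norm_num [Nat.factorial]
end

section
/- If graphs G₀ and G₁ each admit a balanced proper 3-coloring, then their disjoint union G₀ ⊔ G₁ admits a balanced proper 3-coloring, possibly after permuting the colors in one of the colorings. -/
/-!
Record a 3-coloring by its vector of class sizes. Being balanced means that this vector has
spread at most one, i.e. takes only two consecutive values. Given two such vectors, sort the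
first increasingly and the second decreasingly and add them position by position: at every
pair of positions one summand can only go up by one while the other can only go down, so the
sum again has spread at most one. Permuting the colors of `χ₁` realizes this pairing.
-/

open scoped Classical

/-- The disjoint union of two simple graphs. -/
def sumGraph {V₀ V₁ : Type*} (G : SimpleGraph V₀) (H : SimpleGraph V₁) :
    SimpleGraph (V₀ ⊕ V₁) where
  Adj x y :=
    (∃ a b, x = Sum.inl a ∧ y = Sum.inl b ∧ G.Adj a b) ∨
      (∃ a b, x = Sum.inr a ∧ y = Sum.inr b ∧ H.Adj a b)
  symm := by
    constructor
    rintro x y (⟨a, b, rfl, rfl, h⟩ | ⟨a, b, rfl, rfl, h⟩)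
    · exact Or.inl ⟨b, a, rfl, rfl, h.symm⟩
    · exact Or.inr ⟨b, a, rfl, rfl, h.symm⟩
  loopless := by
    constructor
    rintro x (⟨a, b, rfl, h1, h2⟩ | ⟨a, b, rfl, h1, h2⟩) <;>
      (injection h1 with h; subst h; exact h2.ne rfl)

/-- A 3-coloring is balanced if each color class has size between `⌊n/3⌋` and `⌈n/3⌉`. -/
def BalancedColoring {V : Type*} [Fintype V] (χ : V → Fin 3) : Prop :=
  ∀ c : Fin 3,
    Fintype.card V / 3 ≤ (Finset.univ.filter (fun x => χ x = c)).card ∧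
      (Finset.univ.filter (fun x => χ x = c)).card ≤ (Fintype.card V + 2) / 3

open Finset

def SpreadLeOne {ι : Type*} (a : ι → ℕ) : Prop :=
  ∀ i j, a i ≤ a j + 1

lemma SpreadLeOne.comp {ι κ : Type*} {a : ι → ℕ} (ha : SpreadLeOne a) (f : κ → ι) :
    SpreadLeOne (a ∘ f) :=
  fun i j => ha (f i) (f j)

lemma SpreadLeOne.of_comp_surjective {ι κ : Type*} {a : ι → ℕ} {f : κ → ι}
    (hf : Function.Surjective f) (ha : SpreadLeOne (a ∘ f)) : SpreadLeOne a := by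
  intro i j
  obtain ⟨i, rfl⟩ := hf i
  obtain ⟨j, rfl⟩ := hf j
  exact ha i j

lemma SpreadLeOne.add_of_antitone_of_monotone {ι : Type*} [LinearOrder ι] {a b : ι → ℕ}
    (ha : SpreadLeOne a) (hb : SpreadLeOne b) (ha_anti : Antitone a) (hb_mono : Monotone b) :
    SpreadLeOne (a + b) := by
  intro i j
  simp only [Pi.add_apply]
  have := ha i j
  have := hb i j
  rcases le_total i j with hij | hji
  · have := hb_mono hij
    omega
  · have := ha_anti hji
    omega

lemma exists_perm_spreadLeOne_add_comp {m : ℕ} {a b : Fin m → ℕ}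
    (ha : SpreadLeOne a) (hb : SpreadLeOne b) :
    ∃ σ : Equiv.Perm (Fin m), SpreadLeOne (a + b ∘ σ) := by
  set s := Tuple.sort a
  set t := Tuple.sort b
  refine ⟨t * Fin.revPerm * s⁻¹, SpreadLeOne.of_comp_surjective s.surjective ?_⟩
  have hs : Monotone (a ∘ s) := Tuple.monotone_sort a
  have ht : Antitone (b ∘ t ∘ Fin.revPerm) :=
    (Tuple.monotone_sort b).comp_antitone Fin.rev_anti
  have key := (hb.comp (t ∘ Fin.revPerm)).add_of_antitone_of_monotone (ha.comp s) ht hs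
  convert key using 1
  ext i
  simp [add_comm]

lemma spreadLeOne_iff_forall_div_three_le {a : Fin 3 → ℕ} :
    SpreadLeOne a ↔ ∀ c, (∑ i, a i) / 3 ≤ a c ∧ a c ≤ (∑ i, a i + 2) / 3 := by
  simp only [SpreadLeOne, Fin.sum_univ_three, Fin.forall_fin_succ, Fin.succ_zero_eq_one,
    Fin.succ_one_eq_two, IsEmpty.forall_iff, and_true]
  omega

section ColorCount

variable {V : Type*} [Fintype V] {k : ℕ}

def colorCount (χ : V → Fin k) (c : Fin k) : ℕ :=
  (univ.filter fun x => χ x = c).card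

lemma sum_colorCount (χ : V → Fin k) : ∑ c, colorCount χ c = Fintype.card V :=
  (card_eq_sum_card_fiberwise fun x _ => mem_univ (χ x)).symm

lemma colorCount_perm_comp (σ : Equiv.Perm (Fin k)) (χ : V → Fin k) :
    colorCount (σ ∘ χ) = colorCount χ ∘ σ.symm := by
  ext c
  simp [colorCount, ← Equiv.eq_symm_apply]

lemma colorCount_sumElim {W : Type*} [Fintype W] (χ : V → Fin k) (ψ : W → Fin k) :
    colorCount (Sum.elim χ ψ) = colorCount χ + colorCount ψ := by
  ext c
  simp only [colorCount, Pi.add_apply, ← card_disjSum]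
  congr 1
  ext (x | x) <;> simp

lemma balancedColoring_iff_spreadLeOne (χ : V → Fin 3) :
    BalancedColoring χ ↔ SpreadLeOne (colorCount χ) := by
  rw [spreadLeOne_iff_forall_div_three_le, sum_colorCount]
  rfl

end ColorCount

lemma sumGraph_adj_sumElim {V₀ V₁ α : Type*} {G₀ : SimpleGraph V₀} {G₁ : SimpleGraph V₁}
    {χ₀ : V₀ → α} {χ₁ : V₁ → α}
    (h₀ : ∀ a b, G₀.Adj a b → χ₀ a ≠ χ₀ b) (h₁ : ∀ a b, G₁.Adj a b → χ₁ a ≠ χ₁ b) :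
    ∀ x y, (sumGraph G₀ G₁).Adj x y → Sum.elim χ₀ χ₁ x ≠ Sum.elim χ₀ χ₁ y := by
  rintro x y (⟨a, b, rfl, rfl, hab⟩ | ⟨a, b, rfl, rfl, hab⟩)
  · exact h₀ a b hab
  · exact h₁ a b hab

theorem stmt14 {V₀ V₁ : Type*} [Fintype V₀] [Fintype V₁]
    (G₀ : SimpleGraph V₀) (G₁ : SimpleGraph V₁)
    (χ₀ : V₀ → Fin 3) (χ₁ : V₁ → Fin 3)
    (h₀p : ∀ a b, G₀.Adj a b → χ₀ a ≠ χ₀ b) (h₀b : BalancedColoring χ₀)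
    (h₁p : ∀ a b, G₁.Adj a b → χ₁ a ≠ χ₁ b) (h₁b : BalancedColoring χ₁) :
    ∃ χ : V₀ ⊕ V₁ → Fin 3,
      (∀ x y, (sumGraph G₀ G₁).Adj x y → χ x ≠ χ y) ∧ BalancedColoring χ := by
  rw [balancedColoring_iff_spreadLeOne] at h₀b h₁b
  obtain ⟨σ, hσ⟩ := exists_perm_spreadLeOne_add_comp h₀b h₁b
  refine ⟨Sum.elim χ₀ (σ.symm ∘ χ₁), sumGraph_adj_sumElim h₀p fun a b hab h => ?_, ?_⟩
  · exact h₁p a b hab (σ.symm.injective h)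
  · rwa [balancedColoring_iff_spreadLeOne, colorCount_sumElim, colorCount_perm_comp,
      Equiv.symm_symm]
end

section
/- Every permutation σ of a finite set with no fixed points (so its functional graph is a disjoint union of directed cycles of length ≥ 2 on n vertices) admits a 3-coloring χ : [n] → {0,1,2} such that χ(i) ≠ χ(σ(i)) for all i, and each color is used at least ⌊n/3⌋ and at most ⌈n/3⌉ times. -/
/-!
Colour the cycles of `σ` one at a time, keeping the colour counts balanced (any two differ by at
most one). A cycle of length `L = 3k + r` with `L ≥ 2` has a proper colouring using `r` of the
colours `k + 1` times and the remaining ones `k` times; giving these `r` extra occurrences to the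
`r` currently least used colours keeps the counts balanced. Balanced counts of three colours
summing to `n` lie between `⌊n/3⌋` and `⌈n/3⌉`.
-/

open Finset

def IsBalanced {ι : Type*} (f : ι → ℕ) : Prop :=
  ∀ i j, f i ≤ f j + 1

theorem IsBalanced.add_ite_of_le {ι : Type*} {f : ι → ℕ} (hf : IsBalanced f) (P : ι → Prop)
    [DecidablePred P] (hP : ∀ i j, P i → ¬P j → f i ≤ f j) (m : ℕ) :
    IsBalanced fun i => f i + (m + if P i then 1 else 0) := by
  intro i j
  have hij := hf i j
  by_cases hi : P i <;> by_cases hj : P j <;> simp only [hi, hj, if_true, if_false]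
  · omega
  · have := hP i j hi hj
    omega
  all_goals omega

theorem IsBalanced.sum_div_three_le_and_le {f : Fin 3 → ℕ} (hf : IsBalanced f) (c : Fin 3) :
    (∑ i, f i) / 3 ≤ f c ∧ f c ≤ (∑ i, f i + 2) / 3 := by
  have := hf 0 1; have := hf 1 0; have := hf 0 2; have := hf 2 0; have := hf 1 2; have := hf 2 1
  rw [Fin.sum_univ_three]
  fin_cases c <;> dsimp <;> omega

/-- The word `(201)^⌊L/3⌋` followed by `0` or `01` (according to `L % 3`): a proper colouring of
an `L`-cycle in which exactly the colours below `L % 3` occur once more than the others. -/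
def cyclePattern (L j : ℕ) : Fin 3 :=
  if j < 3 * (L / 3) then Fin.ofNat 3 (j + 2) else Fin.ofNat 3 j

theorem cyclePattern_ne_succ (L j : ℕ) : cyclePattern L j ≠ cyclePattern L (j + 1) := by
  unfold cyclePattern
  split_ifs <;> simp only [ne_eq, Fin.ext_iff, Fin.val_ofNat] <;> omega

theorem cyclePattern_pred_ne_zero {L : ℕ} (hL : 2 ≤ L) :
    cyclePattern L (L - 1) ≠ cyclePattern L 0 := by
  unfold cyclePattern
  split_ifs <;> simp only [ne_eq, Fin.ext_iff, Fin.val_ofNat] <;> omega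

theorem cyclePattern_mod_ne_succ_mod {L : ℕ} (hL : 2 ≤ L) (k : ℕ) :
    cyclePattern L (k % L) ≠ cyclePattern L ((k + 1) % L) := by
  rw [Nat.add_mod, Nat.one_mod_eq_one.2 (by omega)]
  have hk := Nat.mod_lt k (show 0 < L by omega)
  rcases (show k % L + 1 < L ∨ k % L = L - 1 by omega) with hlt | heq
  · rw [Nat.mod_eq_of_lt hlt]
    exact cyclePattern_ne_succ L _
  · rw [heq, Nat.sub_add_cancel (by omega), Nat.mod_self]
    exact cyclePattern_pred_ne_zero hL

theorem card_filter_cyclePattern (L : ℕ) (i : Fin 3) :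
    #{j ∈ range L | cyclePattern L j = i} = L / 3 + if (i : ℕ) < L % 3 then 1 else 0 := by
  obtain ⟨k, r, hr, rfl⟩ : ∃ k r, r < 3 ∧ L = 3 * k + r :=
    ⟨L / 3, L % 3, L.mod_lt (by norm_num), (L.div_add_mod 3).symm⟩
  have hk : (3 * k + r) / 3 = k := by omega
  rw [hk, show (3 * k + r) % 3 = r by omega, ← Nat.count_eq_card_filter_range, Nat.count_add]
  congr 1
  · have hcount := Nat.count_modEq_card (3 * k) (r := 3) (by norm_num) ((i : ℕ) + 1)
    rw [Nat.mul_mod_right, Nat.mul_div_cancel_left _ (by norm_num), if_neg (Nat.not_lt_zero _),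
      add_zero] at hcount
    refine Eq.trans ?_ hcount
    rw [Nat.count_eq_card_filter_range, Nat.count_eq_card_filter_range]
    refine congrArg card (filter_congr fun j hj => ?_)
    rw [mem_range] at hj
    simp only [cyclePattern, hk, if_pos hj, Fin.ext_iff, Fin.val_ofNat, Nat.ModEq]
    omega
  · have htail : ∀ x, cyclePattern (3 * k + r) (3 * k + x) = Fin.ofNat 3 x := by
      intro x
      rw [cyclePattern, hk, if_neg (by omega), Fin.ext_iff, Fin.val_ofNat, Fin.val_ofNat]
      omega
    simp only [htail]
    interval_cases r <;> fin_cases i <;> decide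

namespace Equiv.Perm

variable {α β : Type*} {σ : Perm α} {s : Finset α} {a : α}

theorem IsCycleOn.exists_pow_apply_eq_of_periodic (hσ : σ.IsCycleOn s) (ha : a ∈ s)
    {p : ℕ → β} (hp : Function.Periodic p #s) : ∃ χ : α → β, ∀ k, χ ((σ ^ k) a) = p k := by
  classical
  refine ⟨fun x => if h : ∃ k, (σ ^ k) a = x then p h.choose else p 0, fun k => ?_⟩
  have h : ∃ j, (σ ^ j) a = (σ ^ k) a := ⟨k, rfl⟩
  dsimp only
  rw [dif_pos h, ← hp.map_mod_nat, ← hp.map_mod_nat k]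
  exact congrArg p ((hσ.pow_apply_eq_pow_apply ha).1 h.choose_spec)

theorem IsCycleOn.card_filter_eq_card_filter_range [DecidableEq β] (hσ : σ.IsCycleOn s)
    (ha : a ∈ s) {χ : α → β} {p : ℕ → β} (hχ : ∀ k, χ ((σ ^ k) a) = p k) (b : β) :
    #{x ∈ s | χ x = b} = #{k ∈ range #s | p k = b} := by
  symm
  refine card_bij (fun k _ => (σ ^ k) a) ?_ ?_ ?_
  · intro k hk
    rw [mem_filter] at hk ⊢
    exact ⟨hσ.1.mapsTo.perm_pow k ha, (hχ k).trans hk.2⟩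
  · intro k hk j hj hkj
    simp only [mem_filter, mem_range] at hk hj
    have := (hσ.pow_apply_eq_pow_apply ha).1 hkj
    rwa [Nat.ModEq, Nat.mod_eq_of_lt hk.1, Nat.mod_eq_of_lt hj.1] at this
  · intro x hx
    rw [mem_filter] at hx
    obtain ⟨k, hk, rfl⟩ := hσ.exists_pow_eq ha hx.1
    exact ⟨k, mem_filter.2 ⟨mem_range.2 hk, (hχ k).symm.trans hx.2⟩, rfl⟩

theorem IsCycleOn.exists_coloring_isBalanced_add (hσ : σ.IsCycleOn s) (hs : 2 ≤ #s)
    {h : Fin 3 → ℕ} (hh : IsBalanced h) :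
    ∃ χ : α → Fin 3,
      (∀ x ∈ s, χ x ≠ χ (σ x)) ∧ IsBalanced fun c => h c + #{x ∈ s | χ x = c} := by
  obtain ⟨a, ha⟩ := card_pos.1 (show 0 < #s by omega)
  set τ := Tuple.sort h
  obtain ⟨χ, hχ⟩ := hσ.exists_pow_apply_eq_of_periodic ha
    (p := fun k => τ (cyclePattern #s (k % #s))) fun k => by simp only [Nat.add_mod_right]
  refine ⟨χ, fun x hx => ?_, ?_⟩
  · obtain ⟨k, -, rfl⟩ := hσ.exists_pow_eq ha hx
    rw [← mul_apply, ← pow_succ', hχ, hχ]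
    exact τ.injective.ne (cyclePattern_mod_ne_succ_mod hs k)
  have hcount :
      ∀ c, #{x ∈ s | χ x = c} = #s / 3 + if (τ.symm c : ℕ) < #s % 3 then 1 else 0 := by
    intro c
    rw [hσ.card_filter_eq_card_filter_range ha hχ, ← card_filter_cyclePattern]
    refine congrArg card (filter_congr fun k hk => ?_)
    rw [Nat.mod_eq_of_lt (mem_range.1 hk), Equiv.eq_symm_apply]
  -- sorting the colours by `h` makes the colours below `#s % 3` the least used ones
  have hsorted : IsBalanced fun i => h (τ i) + (#s / 3 + if (i : ℕ) < #s % 3 then 1 else 0) :=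
    IsBalanced.add_ite_of_le (fun i j => hh (τ i) (τ j)) _
      (fun i j hi hj => Tuple.monotone_sort h (Fin.le_iff_val_le_val.2 (by omega))) _
  intro c d
  simpa only [hcount, Equiv.apply_symm_apply] using hsorted (τ.symm c) (τ.symm d)

theorem exists_coloring_isBalanced [Fintype α] [DecidableEq α] (hσ : ∀ x, σ x ≠ x)
    (s : Finset α) (hs : Set.MapsTo σ s s) :
    ∃ χ : α → Fin 3, (∀ x ∈ s, χ x ≠ χ (σ x)) ∧ IsBalanced fun c => #{x ∈ s | χ x = c} := by
  induction s using Finset.strongInduction with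
  | H s ih =>
    rcases s.eq_empty_or_nonempty with rfl | ⟨a, ha⟩
    · exact ⟨fun _ => 0, by simp, fun _ _ => by simp⟩
    set C := (σ.cycleOf a).support
    have hC : ∀ x, x ∈ C ↔ σ.SameCycle a x := fun x => mem_support_cycleOf_iff' (hσ a)
    have hCσ : ∀ x, σ x ∈ C ↔ x ∈ C := fun x => by rw [hC, hC, sameCycle_apply_right]
    have haC : a ∈ C := (hC a).2 (SameCycle.refl σ a)
    have hCs : C ⊆ s := fun x hx => by
      obtain ⟨k, -, -, rfl⟩ := ((hC x).1 hx).exists_pow_eq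
      rw [coe_pow]
      exact hs.iterate k ha
    have hsC : Set.MapsTo σ ↑(s \ C) ↑(s \ C) := fun x hx => by
      simp only [coe_sdiff, Set.mem_sdiff, mem_coe] at hx ⊢
      exact ⟨hs hx.1, (hCσ x).not.2 hx.2⟩
    obtain ⟨χ', hχ', hbal'⟩ := ih (s \ C) (sdiff_ssubset hCs ⟨a, haC⟩) hsC
    obtain ⟨χC, hχC, hbal⟩ := (isCycleOn_support_cycleOf σ a).exists_coloring_isBalanced_add
      (two_le_card_support_cycleOf_iff.2 (hσ a)) hbal'
    refine ⟨fun x => if x ∈ C then χC x else χ' x, fun x hx => ?_, ?_⟩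
    · by_cases hxC : x ∈ C
      · simpa only [hxC, (hCσ x).2 hxC, if_true] using hχC x hxC
      · simpa only [hxC, (hCσ x).not.2 hxC, if_false] using hχ' x (mem_sdiff.2 ⟨hx, hxC⟩)
    · convert hbal using 2 with c
      conv_lhs => rw [← sdiff_union_of_subset hCs]
      rw [filter_union, card_union_of_disjoint (disjoint_filter_filter sdiff_disjoint)]
      congr 2 <;> refine filter_congr fun x hx => ?_
      · simp only [if_neg (mem_sdiff.1 hx).2]
      · simp only [if_pos hx]

end Equiv.Perm

theorem stmt15 (n : ℕ) (σ : Equiv.Perm (Fin n)) (hσ : ∀ i, σ i ≠ i) :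
    ∃ χ : Fin n → Fin 3,
      (∀ i, χ i ≠ χ (σ i)) ∧
      ∀ c : Fin 3,
        n / 3 ≤ (Finset.univ.filter (fun i => χ i = c)).card ∧
          (Finset.univ.filter (fun i => χ i = c)).card ≤ (n + 2) / 3 := by
  obtain ⟨χ, hχ, hbal⟩ := Equiv.Perm.exists_coloring_isBalanced hσ univ (by simp)
  have hsum : ∑ c, #{i ∈ univ | χ i = c} = n := by
    rw [← card_eq_sum_card_fiberwise fun _ _ => mem_univ _, card_univ, Fintype.card_fin]
  refine ⟨χ, fun i => hχ i (mem_univ i), fun c => ?_⟩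
  simpa only [hsum] using hbal.sum_div_three_le_and_le c
end

section
/- (Counting Lemma) Suppose in an oblivious reconfigurable network topology with connection schedule π, a node a can reach k other nodes within L timesteps using at most h physical hops per path, where h ≤ L/3. Then k ≤ 2·C(L, h), where C(L,h) is the binomial coefficient. -/
open scoped Classical

/-- The position of a message that starts at node `a` at time `0` and, at each timestep `t`,
traverses the physical edge of the connection schedule `π` if `b t = true` and waits
otherwise. -/
def pos {N : ℕ} (π : ℕ → Equiv.Perm (Fin N)) (b : ℕ → Bool) (a : Fin N) : ℕ → Fin N
  | 0 => a
  | t + 1 => if b t then (π t) (pos π b a t) else pos π b a t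

/-! A path of length `L` is determined by its set of hop times `S ⊆ [0, L)`, so at most
`∑_{i ≤ h} C(L, i)` nodes are reachable with at most `h` hops; for `3h ≤ L` consecutive binomial
coefficients below `h` at least double, so this sum is at most `2 C(L, h)`. -/

open Finset

namespace Nat

theorem two_mul_choose_le_choose_succ {n k : ℕ} (hk : 3 * k + 2 ≤ n) :
    2 * n.choose k ≤ n.choose (k + 1) := by
  have hmul : 2 * n.choose k * (k + 1) ≤ n.choose (k + 1) * (k + 1) := by
    rw [choose_succ_right_eq, mul_assoc, mul_left_comm]
    exact Nat.mul_le_mul_left _ (by omega)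
  exact Nat.le_of_mul_le_mul_right hmul k.succ_pos

theorem sum_range_succ_choose_le_two_mul_choose {n k : ℕ} (hk : 3 * k ≤ n) :
    ∑ i ∈ range (k + 1), n.choose i ≤ 2 * n.choose k := by
  induction k with
  | zero => simp
  | succ k ih =>
    rw [sum_range_succ]
    have := ih (by omega)
    have := two_mul_choose_le_choose_succ (n := n) (k := k) (by omega)
    omega

end Nat

section Routing

variable {N : ℕ} (π : ℕ → Equiv.Perm (Fin N)) (a : Fin N)

theorem pos_congr {b b' : ℕ → Bool} {n : ℕ} (hb : ∀ t < n, b t = b' t) :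
    pos π b a n = pos π b' a n := by
  induction n with
  | zero => rfl
  | succ n ih => simp only [pos, ih fun t ht => hb t (by omega), hb n n.lt_succ_self]

def hopSet (b : ℕ → Bool) (L : ℕ) : Finset ℕ := (range L).filter fun t => b t = true

theorem pos_decide_mem_hopSet (b : ℕ → Bool) (L : ℕ) :
    pos π (fun t => decide (t ∈ hopSet b L)) a L = pos π b a L :=
  pos_congr π a fun t ht => by simp [hopSet, ht]

def reachableWithin (L h : ℕ) : Finset (Fin N) :=
  (range (h + 1)).biUnion fun i =>
    (powersetCard i (range L)).image fun S => pos π (fun t => decide (t ∈ S)) a L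

theorem pos_mem_reachableWithin {L h : ℕ} {b : ℕ → Bool} (hb : (hopSet b L).card ≤ h) :
    pos π b a L ∈ reachableWithin π a L h := by
  rw [← pos_decide_mem_hopSet]
  exact mem_biUnion.2 ⟨_, mem_range.2 (by omega),
    mem_image_of_mem _ (mem_powersetCard.2 ⟨filter_subset _ _, rfl⟩)⟩

theorem card_reachableWithin_le (L h : ℕ) :
    (reachableWithin π a L h).card ≤ ∑ i ∈ range (h + 1), L.choose i :=
  card_biUnion_le.trans <| sum_le_sum fun i _ =>
    card_image_le.trans (by rw [card_powersetCard, card_range])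

end Routing

theorem stmt18 (N L h : ℕ) (π : ℕ → Equiv.Perm (Fin N)) (a : Fin N)
    (hh : h ≤ L / 3) (k : ℕ)
    (hk : k = (Finset.univ.filter (fun c : Fin N => c ≠ a ∧
        ∃ b : ℕ → Bool, ((Finset.range L).filter (fun t => b t = true)).card ≤ h ∧
          pos π b a L = c)).card) :
    k ≤ 2 * Nat.choose L h := by
  subst hk
  calc _ ≤ (reachableWithin π a L h).card := card_le_card fun c hc => by
          obtain ⟨-, b, hb, rfl⟩ := (mem_filter.1 hc).2
          exact pos_mem_reachableWithin π a hb
    _ ≤ ∑ i ∈ range (h + 1), L.choose i := card_reachableWithin_le π a L h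
    _ ≤ 2 * L.choose h := Nat.sum_range_succ_choose_le_two_mul_choose (by omega)
end

section
/- In any connection schedule on N nodes, if every node can reach every other node within L timesteps using routing paths of at most g physical hops, then ∑_{i=0}^{g} C(L,i) ≥ N, and consequently L = Ω(g·N^{1/g}). -/
open scoped Classical

/-!
A route of length `L` is determined by the set of timesteps at which it hops, so the nodes
reachable from `a` with at most `g` hops are the image of the subsets of `range L` of size at
most `g`; there are `∑_{i ≤ g} C(L, i)` of these. For the asymptotic form, evaluating the
binomial expansion of `(1 + x) ^ L` at `x = g / L` gives `∑_{i ≤ g} C(L, i) ≤ (e L / g) ^ g`,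
and taking `g`-th roots yields `g N ^ (1 / g) ≤ e L`.
-/

open Finset

theorem pos_congr_s19 {N : ℕ} (π : ℕ → Equiv.Perm (Fin N)) {f f' : ℕ → Bool} (a : Fin N) {t : ℕ}
    (h : ∀ s < t, f s = f' s) : pos π f a t = pos π f' a t := by
  induction t with
  | zero => rfl
  | succ t ih =>
    simp only [pos, h t t.lt_succ_self, ih fun s hs => h s (hs.trans t.lt_succ_self)]

theorem pos_eq_pos_mem_hops {N : ℕ} (π : ℕ → Equiv.Perm (Fin N)) (f : ℕ → Bool) (a : Fin N)
    (t : ℕ) : pos π f a t = pos π (fun s => decide (s ∈ {s ∈ range t | f s = true})) a t :=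
  pos_congr_s19 π a fun s hs => by simp [hs]

noncomputable def reachable {N : ℕ} (π : ℕ → Equiv.Perm (Fin N)) (L g : ℕ) (a : Fin N) :
    Finset (Fin N) :=
  {b | ∃ f : ℕ → Bool, #{t ∈ range L | f t = true} ≤ g ∧ pos π f a L = b}

theorem card_reachable_le_sum_choose {N : ℕ} (π : ℕ → Equiv.Perm (Fin N)) (a : Fin N)
    (L g : ℕ) :
    #(reachable π L g a) ≤ ∑ i ∈ range (g + 1), L.choose i := by
  set routes := (range (g + 1)).biUnion fun i => powersetCard i (range L)
  have hsub : reachable π L g a ⊆ routes.image fun s => pos π (fun t => decide (t ∈ s)) a L := by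
    intro b hb
    obtain ⟨f, hf, rfl⟩ := (mem_filter.mp hb).2
    refine mem_image.mpr ⟨_, ?_, (pos_eq_pos_mem_hops π f a L).symm⟩
    exact mem_biUnion.mpr
      ⟨_, mem_range.mpr (Nat.lt_succ_of_le hf), mem_powersetCard.mpr ⟨filter_subset _ _, rfl⟩⟩
  calc _ ≤ #routes := (card_le_card hsub).trans card_image_le
    _ ≤ ∑ i ∈ range (g + 1), #(powersetCard i (range L)) := card_biUnion_le
    _ = ∑ i ∈ range (g + 1), L.choose i := by simp only [card_powersetCard, card_range]

theorem card_le_sum_choose_of_forall_reachable {N L g : ℕ} (π : ℕ → Equiv.Perm (Fin N))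
    (hroute : ∀ a b : Fin N, ∃ f : ℕ → Bool,
      #{t ∈ range L | f t = true} ≤ g ∧ pos π f a L = b) :
    N ≤ ∑ i ∈ range (g + 1), L.choose i := by
  rcases N.eq_zero_or_pos with rfl | hN
  · exact Nat.zero_le _
  calc N = #(univ : Finset (Fin N)) := (card_fin N).symm
    _ = #(reachable π L g ⟨0, hN⟩) := by
      rw [reachable, filter_true_of_mem fun b _ => hroute _ b]
    _ ≤ _ := card_reachable_le_sum_choose π _ L g

theorem sum_choose_mul_pow_le_one_add_pow {x : ℝ} (hx0 : 0 ≤ x) (hx1 : x ≤ 1) {g L : ℕ}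
    (hgL : g ≤ L) : (∑ i ∈ range (g + 1), (L.choose i : ℝ)) * x ^ g ≤ (1 + x) ^ L :=
  calc (∑ i ∈ range (g + 1), (L.choose i : ℝ)) * x ^ g
      ≤ ∑ i ∈ range (g + 1), (L.choose i : ℝ) * x ^ i := by
        rw [sum_mul]
        refine sum_le_sum fun i hi => mul_le_mul_of_nonneg_left ?_ (Nat.cast_nonneg _)
        exact pow_le_pow_of_le_one hx0 hx1 (Nat.lt_succ_iff.mp (mem_range.mp hi))
    _ ≤ ∑ i ∈ range (L + 1), (L.choose i : ℝ) * x ^ i :=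
        sum_le_sum_of_subset_of_nonneg (range_subset_range.mpr (by omega))
          fun i _ _ => by positivity
    _ = (1 + x) ^ L := by
        rw [add_comm 1 x, add_pow]
        simp only [one_pow, mul_one, mul_comm]

theorem sum_choose_le_exp_mul_div_pow {g L : ℕ} (hg : 0 < g) (hgL : g ≤ L) :
    ∑ i ∈ range (g + 1), (L.choose i : ℝ) ≤ (Real.exp 1 * L / g) ^ g := by
  have hgR : (0 : ℝ) < g := by exact_mod_cast hg
  have hLR : (0 : ℝ) < L := by exact_mod_cast hg.trans_le hgL
  have hx1 : (g : ℝ) / L ≤ 1 := (div_le_one hLR).mpr (by exact_mod_cast hgL)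
  have hexp : (1 + (g : ℝ) / L) ^ L ≤ Real.exp 1 ^ g :=
    calc (1 + (g : ℝ) / L) ^ L ≤ Real.exp ((g : ℝ) / L) ^ L := by
          gcongr
          linarith [Real.add_one_le_exp ((g : ℝ) / L)]
      _ = Real.exp 1 ^ g := by rw [← Real.exp_nat_mul, Real.exp_one_pow]; field_simp
  have hkey := (sum_choose_mul_pow_le_one_add_pow (by positivity) hx1 hgL).trans hexp
  rwa [← le_div_iff₀ (by positivity), ← div_pow, div_div_eq_mul_div] at hkey

theorem stmt19 : ∃ c : ℝ, 0 < c ∧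
    ∀ (N L g : ℕ) (π : ℕ → Equiv.Perm (Fin N)), 0 < g → g ≤ L →
      (∀ a b : Fin N, ∃ f : ℕ → Bool,
          ((Finset.range L).filter (fun t => f t = true)).card ≤ g ∧ pos π f a L = b) →
      N ≤ ∑ i ∈ Finset.range (g + 1), Nat.choose L i ∧
        c * ((g : ℝ) * (N : ℝ) ^ ((1 : ℝ) / (g : ℝ))) ≤ (L : ℝ) := by
  refine ⟨(Real.exp 1)⁻¹, by positivity, fun N L g π hg hgL hroute => ?_⟩
  have hN := card_le_sum_choose_of_forall_reachable π hroute
  refine ⟨hN, ?_⟩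
  have hgR : (0 : ℝ) < g := by exact_mod_cast hg
  have hNpow : (N : ℝ) ≤ (Real.exp 1 * L / g) ^ (g : ℝ) := by
    rw [Real.rpow_natCast]
    exact (by exact_mod_cast hN : (N : ℝ) ≤ _).trans (sum_choose_le_exp_mul_div_pow hg hgL)
  have hroot : (N : ℝ) ^ ((1 : ℝ) / g) ≤ Real.exp 1 * L / g := by
    rwa [one_div, Real.rpow_inv_le_iff_of_pos (Nat.cast_nonneg _) (by positivity) hgR]
  calc (Real.exp 1)⁻¹ * ((g : ℝ) * (N : ℝ) ^ ((1 : ℝ) / g))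
      ≤ (Real.exp 1)⁻¹ * ((g : ℝ) * (Real.exp 1 * L / g)) := by gcongr
    _ = L := by field_simp
end
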